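/- Let G be a finite set of genes, let R_o be an irreflexive symmetric relation on G with complementary relation R_p (all pairs (x,y), x ≠ y, not in R_o), and let (T,t) be an event-labeled tree representing R_o, R_p with labels 'speciation' (for R_o) and 'duplication' (for R_p) such that every inner vertex of T is the least common ancestor of two leaves and no two adjacent inner vertices of T carry the same label. Let σ: G → 𝕊 be a map assigning to each gene the species it resides in. Define 𝒮 to be the set of rooted species triples AB|C, over A, B, C ∈ 𝕊, such that there exist a, b, c ∈ G with σ(a) = A, σ(b) = B, σ(c) = C, σ(a), σ(b), σ(c) pairwise distinct, T contains the rooted triple ab|c, and t(lca(a,c)) = speciation. Then AB|C ∈ 𝒮 if and only if (I) A, B, C are pairwise distinct species, and there exist genes a, b, c ∈ G with σ(a) = A, σ(b) = B, σ(c) = C such that either (IIa) (a,c) ∈ R_o, (b,c) ∈ R_o and (a,b) ∉ R_o, or (IIb) (a,b), (a,c), (b,c) ∈ R_o and there exists a gene d ∈ G with (c,d) ∈ R_o, (a,d) ∉ R_o and (b,d) ∉ R_o. -/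

import Mathlib

/-- `u` lies on the (unique) path from `v` to the root of the tree `T`. -/
def Anc {V : Type} (T : SimpleGraph V) (root u v : V) : Prop :=
  ∀ p : T.Walk v root, p.IsPath → u ∈ p.support

/-- `w` is the least common ancestor of `x` and `y` in the tree `T` rooted at `root`:
it is a common ancestor and every common ancestor of `x` and `y` is an ancestor of `w`. -/
def IsLCA {V : Type} (T : SimpleGraph V) (root w x y : V) : Prop :=
  Anc T root w x ∧ Anc T root w y ∧
    ∀ u, Anc T root u x → Anc T root u y → Anc T root u w

/-- `v` is a leaf of the tree `T` rooted at `root`: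
a non-root vertex of degree one. -/
def IsLeaf {V : Type} (T : SimpleGraph V) (root v : V) : Prop :=
  v ≠ root ∧ ∃! u, T.Adj v u

/-- The simple graph `G_R` of a (symmetric irreflexive) relation `R`. -/
def relGraph {G : Type} (R : G → G → Prop) : SimpleGraph G where
  Adj x y := x ≠ y ∧ (R x y ∨ R y x)
  symm := ⟨fun _ _ h => ⟨Ne.symm h.1, h.2.symm⟩⟩
  loopless := ⟨fun _ h => h.1 rfl⟩

/-- A cograph: a simple graph with no induced path on four vertices. -/
def IsCograph {V : Type} (H : SimpleGraph V) : Prop :=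
  ¬ ∃ a b c d : V, a ≠ b ∧ a ≠ c ∧ a ≠ d ∧ b ≠ c ∧ b ≠ d ∧ c ≠ d ∧
    H.Adj a b ∧ H.Adj b c ∧ H.Adj c d ∧ ¬ H.Adj a c ∧ ¬ H.Adj a d ∧ ¬ H.Adj b d

/-- The tree `T` rooted at `root` contains the rooted triple `xy|z`:
`x`, `y`, `z` are pairwise distinct leaves and the path from `x` to `y`
does not intersect the path from `z` to the root. -/
def ContainsTriple {V : Type} (T : SimpleGraph V) (root x y z : V) : Prop :=
  x ≠ y ∧ x ≠ z ∧ y ≠ z ∧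
  IsLeaf T root x ∧ IsLeaf T root y ∧ IsLeaf T root z ∧
  ∀ (p : T.Walk x y) (q : T.Walk z root), p.IsPath → q.IsPath →
    ∀ v, v ∈ p.support → v ∉ q.support

/-- The event-labeled tree `(T,t)` (with leaves `ι x`, `x : G`) represents the pairwise
disjoint relations `R 0, …, R (k-1)`: for all distinct `x y : G` and all `i`,
the label of `lca (ι x) (ι y)` equals `i` iff `(x,y) ∈ R i`. -/
def RepresentsRel {G V : Type} (k : ℕ) (R : Fin k → G → G → Prop)
    (T : SimpleGraph V) (root : V) (ι : G → V) (t : V → Fin k) : Prop :=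
  ∀ x y : G, x ≠ y → ∀ w : V, IsLCA T root w (ι x) (ι y) →
    ∀ i : Fin k, (t w = i ↔ R i x y)

/-- There exists an event-labeled tree representing the relations `R 0, …, R (k-1)`:
a rooted tree whose leaf set is exactly `G` (via the injection `ι`) together with an
event labeling `t` such that `t (lca x y) = i ↔ (x,y) ∈ R i` for all distinct `x, y`. -/
def HasEventTree (G : Type) (k : ℕ) (R : Fin k → G → G → Prop) : Prop :=
  ∃ (V : Type) (T : SimpleGraph V) (root : V) (ι : G → V) (t : V → Fin k),
    T.IsTree ∧ Function.Injective ι ∧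
    (∀ v : V, IsLeaf T root v ↔ ∃ g : G, ι g = v) ∧
    RepresentsRel k R T root ι t

/-- Condition (ii): for any three pairwise distinct elements, the three pairs among
them lie in at most two distinct relations. -/
def AtMostTwoColors {G : Type} (k : ℕ) (R : Fin k → G → G → Prop) : Prop :=
  ∀ x y z : G, x ≠ y → x ≠ z → y ≠ z →
    ∀ i j l : Fin k, R i x y → R j x z → R l y z → (i = j ∨ i = l ∨ j = l)

/-- The triple set `𝒯_{R_1,…,R_k}`: `xy|z` belongs to it iff `x,y,z` are pairwise
distinct, `(x,z)` and `(y,z)` lie in the same relation `R i` and `(x,y)` lies in a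
different relation `R j`. -/
def TripleSet {G : Type} (k : ℕ) (R : Fin k → G → G → Prop) (x y z : G) : Prop :=
  x ≠ y ∧ x ≠ z ∧ y ≠ z ∧ ∃ i j : Fin k, i ≠ j ∧ R i x z ∧ R i y z ∧ R j x y

/-- A set of rooted triples (over `G`) is consistent if there is a rooted tree
containing all of them (elements of `G` realized as distinct vertices). -/
def Consistent {G : Type} (Tr : G → G → G → Prop) : Prop :=
  ∃ (V : Type) (T : SimpleGraph V) (root : V) (ι : G → V),
    T.IsTree ∧ Function.Injective ι ∧
    ∀ x y z : G, Tr x y z → ContainsTriple T root (ι x) (ι y) (ι z)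

/-- The two event types labeling inner vertices of the gene tree. -/
inductive Event : Type
  | speciation : Event
  | duplication : Event

/-!
The tree contains `xy|z` exactly when `lca(x,y)` is not an ancestor of `z`, and orthology of two
genes is read off the label of their lca. If `T` contains `ab|c` then `lca(a,b)` lies strictly
below `lca(a,c) = lca(b,c)`, so a speciation there gives `(a,c), (b,c) ∈ R_o`, which is (IIa)
unless `(a,b) ∈ R_o`. In that case the child `u` of `lca(a,c)` towards `lca(a,b)` is an inner
vertex adjacent to a speciation, hence a duplication, and it is `lca(a,d)` for some gene `d`;
then `lca(b,d) = u` and `lca(c,d) = lca(a,c)`, so `d` witnesses (IIb).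

Conversely, if `lca(a,b)` were an ancestor of `c`, it would be `lca(a,c)` or `lca(b,c)`, which
rules out (IIa). Under (IIb) it would lie above `lca(a,c)`, and the duplication `lca(a,d)` could
lie neither above `lca(a,b)` (it would be the speciation `lca(c,d)`) nor strictly below it (then
`lca(b,d)` would be the speciation `lca(a,b)`).
-/

open SimpleGraph Walk

theorem SimpleGraph.Walk.IsPath.append {V : Type} {G : SimpleGraph V}
    {u v w : V} {p : G.Walk u v} {q : G.Walk v w} (hp : p.IsPath) (hq : q.IsPath)
    (h : ∀ x ∈ p.support, x ∈ q.support → x = v) : (p.append q).IsPath := by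
  have hq' := hq.support_nodup
  rw [← q.cons_tail_support, List.nodup_cons] at hq'
  rw [isPath_def, support_append, List.nodup_append]
  refine ⟨hp.support_nodup, hq'.2, fun x hxp y hyq hxy => hq'.1 ?_⟩
  subst hxy
  exact h x hxp (List.mem_of_mem_tail hyq) ▸ hyq

theorem SimpleGraph.IsTree.length_eq_dist {V : Type} {T : SimpleGraph V} (hT : T.IsTree)
    {u v : V} {p : T.Walk u v} (hp : p.IsPath) : p.length = T.dist u v := by
  obtain ⟨q, hq⟩ := hT.connected.exists_walk_length_eq_dist u v
  rw [(hT.existsUnique_path u v).unique hp (isPath_of_length_eq_dist q hq), hq]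

section RootedTree

variable {V : Type} {T : SimpleGraph V} {root u v w w' x y z : V}

theorem anc_iff_mem_support (hT : T.IsTree) {p : T.Walk v root} (hp : p.IsPath) :
    Anc T root u v ↔ u ∈ p.support :=
  ⟨fun h => h p hp, fun h _ hq => (hT.existsUnique_path v root).unique hq hp ▸ h⟩

theorem anc_refl (v : V) : Anc T root v v := fun p _ => p.start_mem_support

theorem anc_root (v : V) : Anc T root root v := fun p _ => p.end_mem_support

theorem Anc.trans (huv : Anc T root u v) (hvw : Anc T root v w) : Anc T root u w := by
  classical
  intro p hp
  have hv := hvw p hp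
  exact p.support_dropUntil_subset_support hv (huv _ (hp.dropUntil hv))

theorem Anc.dist_lt (hT : T.IsTree) (h : Anc T root u v) (hne : u ≠ v) :
    T.dist u root < T.dist v root := by
  classical
  obtain ⟨p, hp, -⟩ := hT.existsUnique_path v root
  have hu := h p hp
  rw [← hT.length_eq_dist hp, ← hT.length_eq_dist (hp.dropUntil hu)]
  exact length_dropUntil_lt_length hu hne

theorem Anc.antisymm (hT : T.IsTree) (huv : Anc T root u v) (hvu : Anc T root v u) :
    u = v := by
  by_contra hne
  exact (huv.dist_lt hT hne).asymm (hvu.dist_lt hT (Ne.symm hne))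

theorem Anc.total (hT : T.IsTree) (hu : Anc T root u w) (hv : Anc T root v w) :
    Anc T root u v ∨ Anc T root v u := by
  classical
  obtain ⟨p, hp, -⟩ := hT.existsUnique_path w root
  have hu' := hu p hp
  have hv' := hv p hp
  rcases List.suffix_or_suffix_of_suffix (p.support_dropUntil_suffix_support hu')
    (p.support_dropUntil_suffix_support hv') with h | h
  · exact Or.inl ((anc_iff_mem_support hT (hp.dropUntil hv')).2 (h.subset (start_mem_support _)))
  · exact Or.inr ((anc_iff_mem_support hT (hp.dropUntil hu')).2 (h.subset (start_mem_support _)))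

theorem anc_of_mem_support_takeUntil [DecidableEq V] (hT : T.IsTree) {p : T.Walk v root}
    (hp : p.IsPath) (hw : w ∈ p.support) (hu : u ∈ (p.takeUntil w hw).support) :
    Anc T root w u := by
  have hu' := p.support_takeUntil_subset_support hw hu
  have hsplit : p = (p.takeUntil u hu').append
      (((p.takeUntil w hw).dropUntil u hu).append (p.dropUntil w hw)) := by
    rw [← takeUntil_takeUntil p hw hu, append_assoc, take_spec, take_spec]
  refine (anc_iff_mem_support hT (hsplit ▸ hp).of_append_right).2 ?_
  exact (mem_support_append_iff _ _).2 (Or.inr (start_mem_support _))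

theorem exists_parent_of_ne_root (hT : T.IsTree) (hv : v ≠ root) :
    ∃ n, T.Adj v n ∧ Anc T root n v := by
  obtain ⟨p, hp, -⟩ := hT.existsUnique_path v root
  obtain ⟨n, hadj, _, rfl⟩ := exists_eq_cons_of_ne hv p
  exact ⟨n, hadj, (anc_iff_mem_support hT hp).2 (by simp)⟩

theorem Anc.exists_child (hT : T.IsTree) (h : Anc T root w v) (hne : w ≠ v) :
    ∃ u, T.Adj u w ∧ Anc T root w u ∧ Anc T root u v := by
  classical
  obtain ⟨p, hp, -⟩ := hT.existsUnique_path v root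
  have hw := h p hp
  obtain ⟨u, hadj, r, hr⟩ := exists_eq_cons_of_ne hne (p.takeUntil w hw).reverse
  have hu : u ∈ (p.takeUntil w hw).support := by
    rw [← List.mem_reverse, ← support_reverse, hr]
    simp
  exact ⟨u, hadj.symm, anc_of_mem_support_takeUntil hT hp hw hu,
    (anc_iff_mem_support hT hp).2 (p.support_takeUntil_subset_support hw hu)⟩

theorem IsLeaf.eq_of_anc (hT : T.IsTree) (hL : IsLeaf T root u) (h : Anc T root u x) :
    u = x := by
  by_contra hne
  obtain ⟨m, hm, hum, -⟩ := h.exists_child hT hne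
  obtain ⟨n, hn, hnu⟩ := exists_parent_of_ne_root hT hL.1
  obtain rfl : m = n := hL.2.unique hm.symm hn
  exact hm.ne (Anc.antisymm hT hnu hum)

theorem not_isLeaf_of_anc (hT : T.IsTree) (hx : Anc T root w x) (hy : Anc T root w y)
    (hxy : x ≠ y) : ¬ IsLeaf T root w := fun hL =>
  hxy ((hL.eq_of_anc hT hx).symm.trans (hL.eq_of_anc hT hy))

theorem exists_isLCA (hT : T.IsTree) (x y : V) : ∃ w, IsLCA T root w x y := by
  classical
  obtain ⟨p, hp, -⟩ := hT.existsUnique_path x root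
  obtain ⟨w, hw, hmax⟩ := (p.support.toFinset.filter (Anc T root · y)).exists_max_image
    (T.dist · root) ⟨root, by simp [anc_root]⟩
  simp only [Finset.mem_filter, List.mem_toFinset] at hw hmax
  have hwx := (anc_iff_mem_support hT hp).2 hw.1
  refine ⟨w, hwx, hw.2, fun u hux huy => ?_⟩
  rcases Anc.total hT hux hwx with h | h
  · exact h
  · obtain rfl | hne := eq_or_ne w u
    · exact anc_refl w
    · exact absurd (hmax u ⟨hux p hp, huy⟩) (h.dist_lt hT hne).not_ge

theorem isLCA_self (x : V) : IsLCA T root x x x :=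
  ⟨anc_refl x, anc_refl x, fun _ h _ => h⟩

theorem IsLCA.symm (h : IsLCA T root w x y) : IsLCA T root w y x :=
  ⟨h.2.1, h.1, fun u hy hx => h.2.2 u hx hy⟩

theorem IsLCA.unique (hT : T.IsTree) (h : IsLCA T root w x y) (h' : IsLCA T root w' x y) :
    w = w' :=
  Anc.antisymm hT (h'.2.2 w h.1 h.2.1) (h.2.2 w' h'.1 h'.2.1)

theorem IsLCA.isLCA_of_anc_of_ne (hT : T.IsTree) (h : IsLCA T root w x y)
    (h' : IsLCA T root w' x z) (hanc : Anc T root w' w) (hne : w' ≠ w) :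
    IsLCA T root w' y z := by
  refine ⟨hanc.trans h.2.1, h'.2.1, fun u huy huz => ?_⟩
  rcases Anc.total hT huy h.2.1 with huw | hwu
  · exact h'.2.2 u (huw.trans h.1) huz
  · exact absurd (Anc.antisymm hT hanc (h'.2.2 w h.1 (hwu.trans huz))) hne

theorem IsLCA.isLCA_or_isLCA_of_anc (hT : T.IsTree) (h : IsLCA T root w x y)
    (hz : Anc T root w z) : IsLCA T root w x z ∨ IsLCA T root w y z := by
  obtain ⟨q, hq⟩ := exists_isLCA (root := root) hT x z
  obtain ⟨r, hr⟩ := exists_isLCA (root := root) hT y z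
  rcases Anc.total hT hq.2.1 hr.2.1 with hqr | hrq
  · left
    rwa [Anc.antisymm hT (h.2.2 q hq.1 (hqr.trans hr.1)) (hq.2.2 w h.1 hz)] at hq
  · right
    rwa [Anc.antisymm hT (h.2.2 r (hrq.trans hq.1) hr.1) (hr.2.2 w h.2.1 hz)] at hr

theorem IsLCA.anc_of_not_anc (hT : T.IsTree) (h : IsLCA T root w x y)
    (h' : IsLCA T root w' x z) (hz : ¬ Anc T root w z) : Anc T root w' w ∧ w' ≠ w := by
  rcases Anc.total hT h'.1 h.1 with hanc | hanc
  · exact ⟨hanc, fun e => hz (e ▸ h'.2.1)⟩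
  · exact absurd (hanc.trans h'.2.1) hz

theorem IsLCA.exists_isPath (hT : T.IsTree) (h : IsLCA T root w x y) :
    ∃ P : T.Walk x y, P.IsPath ∧ w ∈ P.support ∧ ∀ v ∈ P.support, Anc T root w v := by
  classical
  obtain ⟨px, hpx, -⟩ := hT.existsUnique_path x root
  obtain ⟨py, hpy, -⟩ := hT.existsUnique_path y root
  have hwx := h.1 px hpx
  have hwy := h.2.1 py hpy
  have hx : ∀ v ∈ (px.takeUntil w hwx).support, Anc T root w v :=
    fun _ => anc_of_mem_support_takeUntil hT hpx hwx
  have hy : ∀ v ∈ (py.takeUntil w hwy).support, Anc T root w v :=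
    fun _ => anc_of_mem_support_takeUntil hT hpy hwy
  refine ⟨(px.takeUntil w hwx).append (py.takeUntil w hwy).reverse, ?_, by simp, ?_⟩
  · refine (hpx.takeUntil hwx).append (hpy.takeUntil hwy).reverse
      fun v hvx hvy => ?_
    rw [support_reverse, List.mem_reverse] at hvy
    have hvx' := (anc_iff_mem_support hT hpx).2 (px.support_takeUntil_subset_support hwx hvx)
    have hvy' := (anc_iff_mem_support hT hpy).2 (py.support_takeUntil_subset_support hwy hvy)
    exact Anc.antisymm hT (h.2.2 v hvx' hvy') (hx v hvx)
  · intro v hv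
    rw [mem_support_append_iff, support_reverse, List.mem_reverse] at hv
    exact hv.elim (hx v) (hy v)

theorem ContainsTriple.not_anc (hT : T.IsTree) (htri : ContainsTriple T root x y z)
    (h : IsLCA T root w x y) : ¬ Anc T root w z := by
  intro hwz
  obtain ⟨P, hP, hw, -⟩ := h.exists_isPath hT
  obtain ⟨q, hq, -⟩ := hT.existsUnique_path z root
  exact htri.2.2.2.2.2.2 P q hP hq w hw (hwz q hq)

theorem containsTriple_of_not_anc (hT : T.IsTree) (hx : IsLeaf T root x)
    (hy : IsLeaf T root y) (hz : IsLeaf T root z) (hxy : x ≠ y) (hxz : x ≠ z) (hyz : y ≠ z)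
    (h : IsLCA T root w x y) (hwz : ¬ Anc T root w z) : ContainsTriple T root x y z := by
  obtain ⟨P, hP, -, hbelow⟩ := h.exists_isPath hT
  refine ⟨hxy, hxz, hyz, hx, hy, hz, fun p q hp hq v hvp hvq => hwz ?_⟩
  obtain rfl : p = P := (hT.existsUnique_path x y).unique hp hP
  exact (hbelow v hvp).trans ((anc_iff_mem_support hT hq).2 hvq)

end RootedTree

section GeneTree

variable {G V : Type} {Ro : G → G → Prop} {T : SimpleGraph V} {root : V} {ι : G → V}
  {t : V → Event} {a b c : G} {u w₁ w₂ : V}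

def RepresentsOrthology (Ro : G → G → Prop) (T : SimpleGraph V) (root : V) (ι : G → V)
    (t : V → Event) : Prop :=
  ∀ x y : G, x ≠ y → ∀ w : V, IsLCA T root w (ι x) (ι y) →
    (t w = Event.speciation ↔ Ro x y)

-- conditions (IIa) and (IIb)
def OrthologyPattern (Ro : G → G → Prop) (a b c : G) : Prop :=
  (Ro a c ∧ Ro b c ∧ ¬ Ro a b) ∨
    (Ro a b ∧ Ro a c ∧ Ro b c ∧ ∃ d : G, Ro c d ∧ ¬ Ro a d ∧ ¬ Ro b d)

theorem exists_isLCA_ne_of_anc (hT : T.IsTree) (ha : IsLeaf T root (ι a))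
    (hu : ¬ IsLeaf T root u) {g₁ g₂ : G} (hg : IsLCA T root u (ι g₁) (ι g₂))
    (hua : Anc T root u (ι a)) : ∃ d, d ≠ a ∧ IsLCA T root u (ι a) (ι d) := by
  have hne : ∀ g, IsLCA T root u (ι g) (ι a) → g ≠ a := by
    rintro g hga rfl
    exact hu (hga.unique hT (isLCA_self _) ▸ ha)
  rcases hg.isLCA_or_isLCA_of_anc hT hua with h | h
  · exact ⟨g₁, hne g₁ h, h.symm⟩
  · exact ⟨g₂, hne g₂ h, h.symm⟩

theorem exists_gene_of_nested_speciations (hT : T.IsTree)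
    (hrepr : RepresentsOrthology Ro T root ι t) (ha : IsLeaf T root (ι a))
    (hinner : ∀ v : V, ¬ IsLeaf T root v →
      ∃ a b : G, a ≠ b ∧ IsLCA T root v (ι a) (ι b))
    (hdiscr : ∀ u v : V, T.Adj u v → ¬ IsLeaf T root u → ¬ IsLeaf T root v → t u ≠ t v)
    (hab : ι a ≠ ι b) (hac : ι a ≠ ι c)
    (hw₁ : IsLCA T root w₁ (ι a) (ι b)) (hw₂ : IsLCA T root w₂ (ι a) (ι c))
    (hanc : Anc T root w₂ w₁) (hne : w₂ ≠ w₁)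
    (ht₁ : t w₁ = Event.speciation) (ht₂ : t w₂ = Event.speciation) :
    ∃ d, Ro c d ∧ ¬ Ro a d ∧ ¬ Ro b d := by
  obtain ⟨u, hadj, hw₂u, huw₁⟩ := hanc.exists_child hT hne
  have hu : ¬ IsLeaf T root u :=
    not_isLeaf_of_anc hT (huw₁.trans hw₁.1) (huw₁.trans hw₁.2.1) hab
  have htu : t u ≠ Event.speciation :=
    ht₂ ▸ hdiscr u w₂ hadj hu (not_isLeaf_of_anc hT hw₂.1 hw₂.2.1 hac)
  have hu₁ : u ≠ w₁ := fun h => htu (h ▸ ht₁)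
  obtain ⟨g₁, g₂, -, hg⟩ := hinner u hu
  obtain ⟨d, hda, hd⟩ := exists_isLCA_ne_of_anc hT ha hu hg (huw₁.trans hw₁.1)
  have hbd : IsLCA T root u (ι b) (ι d) := hw₁.isLCA_of_anc_of_ne hT hd huw₁ hu₁
  have hcd : IsLCA T root w₂ (ι c) (ι d) :=
    (hd.isLCA_of_anc_of_ne hT hw₂ hw₂u hadj.ne.symm).symm
  have hbd' : b ≠ d := by
    rintro rfl
    exact hu₁ (hd.unique hT hw₁)
  have hcd' : c ≠ d := by
    rintro rfl
    exact hadj.ne (hd.unique hT hw₂)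
  exact ⟨d, (hrepr c d hcd' w₂ hcd).1 ht₂, fun h => htu ((hrepr a d hda.symm u hd).2 h),
    fun h => htu ((hrepr b d hbd' u hbd).2 h)⟩

theorem orthologyPattern_of_containsTriple (hT : T.IsTree)
    (hrepr : RepresentsOrthology Ro T root ι t)
    (hinner : ∀ v : V, ¬ IsLeaf T root v →
      ∃ a b : G, a ≠ b ∧ IsLCA T root v (ι a) (ι b))
    (hdiscr : ∀ u v : V, T.Adj u v → ¬ IsLeaf T root u → ¬ IsLeaf T root v → t u ≠ t v)
    (htri : ContainsTriple T root (ι a) (ι b) (ι c))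
    (hspec : ∀ w : V, IsLCA T root w (ι a) (ι c) → t w = Event.speciation) :
    OrthologyPattern Ro a b c := by
  obtain ⟨w₁, hw₁⟩ := exists_isLCA (root := root) hT (ι a) (ι b)
  obtain ⟨w₂, hw₂⟩ := exists_isLCA (root := root) hT (ι a) (ι c)
  obtain ⟨hanc, hne⟩ := hw₁.anc_of_not_anc hT hw₂ (htri.not_anc hT hw₁)
  have hw₃ : IsLCA T root w₂ (ι b) (ι c) := hw₁.isLCA_of_anc_of_ne hT hw₂ hanc hne
  have ht₂ := hspec w₂ hw₂
  have hRac := (hrepr a c (ne_of_apply_ne ι htri.2.1) w₂ hw₂).1 ht₂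
  have hRbc := (hrepr b c (ne_of_apply_ne ι htri.2.2.1) w₂ hw₃).1 ht₂
  by_cases hRab : Ro a b
  · have ht₁ := (hrepr a b (ne_of_apply_ne ι htri.1) w₁ hw₁).2 hRab
    exact Or.inr ⟨hRab, hRac, hRbc, exists_gene_of_nested_speciations hT hrepr htri.2.2.2.1
      hinner hdiscr htri.1 htri.2.1 hw₁ hw₂ hanc hne ht₁ ht₂⟩
  · exact Or.inl ⟨hRac, hRbc, hRab⟩

theorem containsTriple_of_orthologyPattern (hT : T.IsTree) (hι : Function.Injective ι)
    (hleaf : ∀ g, IsLeaf T root (ι g)) (hrepr : RepresentsOrthology Ro T root ι t)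
    (hsym : ∀ x y, Ro x y → Ro y x) (hab : a ≠ b) (hac : a ≠ c) (hbc : b ≠ c)
    (hII : OrthologyPattern Ro a b c) : ContainsTriple T root (ι a) (ι b) (ι c) := by
  obtain ⟨w₁, hw₁⟩ := exists_isLCA (root := root) hT (ι a) (ι b)
  refine containsTriple_of_not_anc hT (hleaf a) (hleaf b) (hleaf c) (hι.ne hab) (hι.ne hac)
    (hι.ne hbc) hw₁ fun hc => ?_
  obtain ⟨w₂, hw₂⟩ := exists_isLCA (root := root) hT (ι a) (ι c)
  rcases hII with ⟨hRac, hRbc, hRab⟩ | ⟨hRab, hRac, -, d, hRcd, hRad, hRbd⟩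
  · rcases hw₁.isLCA_or_isLCA_of_anc hT hc with h | h
    · exact hRab ((hrepr a b hab w₁ hw₁).1 ((hrepr a c hac w₁ h).2 hRac))
    · exact hRab ((hrepr a b hab w₁ hw₁).1 ((hrepr b c hbc w₁ h).2 hRbc))
  · have hda : d ≠ a := fun h => hRbd (h ▸ hsym a b hRab)
    have hdb : d ≠ b := fun h => hRad (h ▸ hRab)
    have hdc : d ≠ c := fun h => hRad (h ▸ hRac)
    obtain ⟨v, hv⟩ := exists_isLCA (root := root) hT (ι a) (ι d)
    have htv : t v ≠ Event.speciation := mt (hrepr a d hda.symm v hv).1 hRad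
    have ht₁ : t w₁ = Event.speciation := (hrepr a b hab w₁ hw₁).2 hRab
    have ht₂ : t w₂ = Event.speciation := (hrepr a c hac w₂ hw₂).2 hRac
    rcases Anc.total hT hv.1 hw₁.1 with hvw | hwv
    · have hcd := hw₂.isLCA_of_anc_of_ne hT hv (hvw.trans (hw₂.2.2 w₁ hw₁.1 hc))
        fun h => htv (h ▸ ht₂)
      exact htv ((hrepr c d hdc.symm v hcd).2 hRcd)
    · have hbd := (hv.isLCA_of_anc_of_ne hT hw₁ hwv fun h => htv (h ▸ ht₁)).symm
      exact hRbd ((hrepr b d hdb.symm w₁ hbd).1 ht₁)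

end GeneTree

theorem stmt10_general (G : Type)
    (Ro : G → G → Prop)
    (hsym : ∀ x y, Ro x y → Ro y x)
    (S : Type) (σ : G → S)
    (V : Type) (T : SimpleGraph V) (root : V) (ι : G → V) (t : V → Event)
    (hT : T.IsTree) (hι : Function.Injective ι)
    (hleaves : ∀ v : V, IsLeaf T root v ↔ ∃ g : G, ι g = v)
    (hrepr : ∀ x y : G, x ≠ y → ∀ w : V, IsLCA T root w (ι x) (ι y) →
      ((t w = Event.speciation ↔ Ro x y) ∧
       (t w = Event.duplication ↔ (x ≠ y ∧ ¬ Ro x y))))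
    (hinner : ∀ v : V, ¬ IsLeaf T root v →
      ∃ a b : G, a ≠ b ∧ IsLCA T root v (ι a) (ι b))
    (hdiscr : ∀ u v : V, T.Adj u v → ¬ IsLeaf T root u → ¬ IsLeaf T root v →
      t u ≠ t v) :
    ∀ A B C : S,
      (∃ a b c : G, σ a = A ∧ σ b = B ∧ σ c = C ∧
        σ a ≠ σ b ∧ σ a ≠ σ c ∧ σ b ≠ σ c ∧
        ContainsTriple T root (ι a) (ι b) (ι c) ∧
        (∀ w : V, IsLCA T root w (ι a) (ι c) → t w = Event.speciation))
      ↔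
      ((A ≠ B ∧ A ≠ C ∧ B ≠ C) ∧
        ∃ a b c : G, σ a = A ∧ σ b = B ∧ σ c = C ∧
          ((Ro a c ∧ Ro b c ∧ ¬ Ro a b) ∨
           (Ro a b ∧ Ro a c ∧ Ro b c ∧
             ∃ d : G, Ro c d ∧ ¬ Ro a d ∧ ¬ Ro b d))) := by
  have hortho : RepresentsOrthology Ro T root ι t := fun x y hxy w hw => (hrepr x y hxy w hw).1
  intro A B C
  constructor
  · rintro ⟨a, b, c, rfl, rfl, rfl, hab, hac, hbc, htri, hlca⟩
    exact ⟨⟨hab, hac, hbc⟩, a, b, c, rfl, rfl, rfl,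
      orthologyPattern_of_containsTriple hT hortho hinner hdiscr htri hlca⟩
  · rintro ⟨⟨hab, hac, hbc⟩, a, b, c, rfl, rfl, rfl, hII⟩
    have hRac : Ro a c := by rcases hII with ⟨h, -⟩ | ⟨-, h, -⟩ <;> exact h
    have hleaf : ∀ g, IsLeaf T root (ι g) := fun g => (hleaves (ι g)).2 ⟨g, rfl⟩
    refine ⟨a, b, c, rfl, rfl, rfl, hab, hac, hbc, containsTriple_of_orthologyPattern hT hι hleaf
      hortho hsym (ne_of_apply_ne σ hab) (ne_of_apply_ne σ hac) (ne_of_apply_ne σ hbc) hII,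
      fun w hw => (hortho a c (ne_of_apply_ne σ hac) w hw).2 hRac⟩

/-- Let `(T,t)` be an event-labeled gene tree representing the
orthology relation `Ro` (label `speciation`) and its complementary paralogy relation
(label `duplication`), in which every inner vertex is an lca of two leaves and no two
adjacent inner vertices carry the same label, and let `σ` assign to each gene its
species. Then the species triple `AB|C` is in `𝒮` (i.e. witnessed by genes
`a, b, c` from pairwise distinct species with `T` containing `ab|c` and
`t(lca(a,c)) = speciation`) iff (I) `A, B, C` are pairwise distinct and there are genes
`a ∈ A`, `b ∈ B`, `c ∈ C` with either (IIa) `(a,c), (b,c) ∈ Ro` and `(a,b) ∉ Ro`,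
or (IIb) `(a,b), (a,c), (b,c) ∈ Ro` and there is a gene `d` with `(c,d) ∈ Ro`,
`(a,d) ∉ Ro` and `(b,d) ∉ Ro`. -/
theorem stmt10 (G : Type) [Fintype G]
    (Ro : G → G → Prop)
    (hirr : ∀ x, ¬ Ro x x)
    (hsym : ∀ x y, Ro x y → Ro y x)
    (S : Type) (σ : G → S)
    (V : Type) (T : SimpleGraph V) (root : V) (ι : G → V) (t : V → Event)
    (hT : T.IsTree) (hι : Function.Injective ι)
    (hleaves : ∀ v : V, IsLeaf T root v ↔ ∃ g : G, ι g = v)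
    (hrepr : ∀ x y : G, x ≠ y → ∀ w : V, IsLCA T root w (ι x) (ι y) →
      ((t w = Event.speciation ↔ Ro x y) ∧
       (t w = Event.duplication ↔ (x ≠ y ∧ ¬ Ro x y))))
    (hinner : ∀ v : V, ¬ IsLeaf T root v →
      ∃ a b : G, a ≠ b ∧ IsLCA T root v (ι a) (ι b))
    (hdiscr : ∀ u v : V, T.Adj u v → ¬ IsLeaf T root u → ¬ IsLeaf T root v →
      t u ≠ t v) :
    ∀ A B C : S,
      (∃ a b c : G, σ a = A ∧ σ b = B ∧ σ c = C ∧
        σ a ≠ σ b ∧ σ a ≠ σ c ∧ σ b ≠ σ c ∧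
        ContainsTriple T root (ι a) (ι b) (ι c) ∧
        (∀ w : V, IsLCA T root w (ι a) (ι c) → t w = Event.speciation))
      ↔
      ((A ≠ B ∧ A ≠ C ∧ B ≠ C) ∧
        ∃ a b c : G, σ a = A ∧ σ b = B ∧ σ c = C ∧
          ((Ro a c ∧ Ro b c ∧ ¬ Ro a b) ∨
           (Ro a b ∧ Ro a c ∧ Ro b c ∧
             ∃ d : G, Ro c d ∧ ¬ Ro a d ∧ ¬ Ro b d))) :=
  stmt10_general G Ro hsym S σ V T root ι t hT hι hleaves hrepr hinner hdiscr
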